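/- At zero driving force, M₀(0) = a₀ and M₁(0) = a₀², and hence the effective diffusion coefficient satisfies D(0) = M₁(0)/M₀(0)³ = 1/a₀ = 1/((∫₀¹ e^{−φ(x)} dx)·(∫₀¹ e^{φ(s)} ds)) (the Lifson–Jackson formula). -/
import Mathlib


open MeasureTheory intervalIntegral Asymptotics Filter

noncomputable def w0 (φ : ℝ → ℝ) (f x : ℝ) : ℝ :=
  ∫ s in (0:ℝ)..1, Real.exp (φ (x + s) - φ x - f * s)

noncomputable def M0 (φ : ℝ → ℝ) (f : ℝ) : ℝ := ∫ x in (0:ℝ)..1, w0 φ f x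

noncomputable def w1 (φ : ℝ → ℝ) (f x : ℝ) : ℝ :=
  ∫ s in (0:ℝ)..1, (w0 φ f (x + s)) ^ 2 * Real.exp (φ (x + s) - φ x - f * s)

noncomputable def M1 (φ : ℝ → ℝ) (f : ℝ) : ℝ := ∫ x in (0:ℝ)..1, w1 φ f x

lemma per_int (g : ℝ → ℝ) (hg : Function.Periodic g 1) (x : ℝ) :
    (∫ s in (0:ℝ)..1, g (x + s)) = ∫ s in (0:ℝ)..1, g s := by
  rw [intervalIntegral.integral_comp_add_left g x, add_zero]
  simpa using hg.intervalIntegral_add_eq x 0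

lemma exp_per (φ : ℝ → ℝ) (hφper : ∀ x, φ (x + 1) = φ x) (c : ℝ) :
    Function.Periodic (fun t => Real.exp (c * φ t)) 1 := fun t => by simp [hφper]

lemma exp_alg (a b c B : ℝ) :
    (Real.exp (-a) * B) ^ 2 * Real.exp (a - b - 0 * c)
      = (B ^ 2 * Real.exp (-b)) * Real.exp (-a) := by
  rw [zero_mul, sub_zero, mul_pow, sq, mul_right_comm, ← Real.exp_add, ← Real.exp_add,
      mul_assoc, ← Real.exp_add, mul_comm]
  congr 1
  ring_nf

/-- At zero driving force, `M₀(0) = a₀` and `M₁(0) = a₀²`, hence the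
effective diffusion coefficient satisfies `D(0) = M₁(0)/M₀(0)³ = 1/a₀`
(the Lifson–Jackson formula). -/
theorem stmt_13 (φ : ℝ → ℝ) (hφc : Continuous φ) (hφper : ∀ x, φ (x + 1) = φ x)
    (a0 : ℝ)
    (ha0 : a0 = (∫ x in (0:ℝ)..1, Real.exp (-φ x)) * ∫ s in (0:ℝ)..1, Real.exp (φ s)) :
    M0 φ 0 = a0 ∧ M1 φ 0 = a0 ^ 2 ∧
    M1 φ 0 / (M0 φ 0) ^ 3 = 1 / a0 ∧
    M1 φ 0 / (M0 φ 0) ^ 3 =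
      1 / ((∫ x in (0:ℝ)..1, Real.exp (-φ x)) * ∫ s in (0:ℝ)..1, Real.exp (φ s)) := by
  set A : ℝ := ∫ x in (0:ℝ)..1, Real.exp (-φ x) with hA
  set B : ℝ := ∫ s in (0:ℝ)..1, Real.exp (φ s) with hB
  have hperP : Function.Periodic (fun t => Real.exp (φ t)) 1 := fun t => by simp [hφper]
  have hperN : Function.Periodic (fun t => Real.exp (-φ t)) 1 := fun t => by simp [hφper]
  have hintP : ∀ x : ℝ, (∫ s in (0:ℝ)..1, Real.exp (φ (x + s))) = B :=
    fun x => per_int _ hperP x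
  have hintN : ∀ x : ℝ, (∫ s in (0:ℝ)..1, Real.exp (-φ (x + s))) = A :=
    fun x => per_int _ hperN x
  have hw0 : ∀ x : ℝ, w0 φ 0 x = Real.exp (-φ x) * B := by
    intro x
    have : ∀ s : ℝ, Real.exp (φ (x + s) - φ x - 0 * s)
        = Real.exp (-φ x) * Real.exp (φ (x + s)) := by
      intro s; rw [← Real.exp_add]; ring_nf
    rw [w0]
    simp_rw [this]
    rw [intervalIntegral.integral_const_mul, hintP x]
  have hw1 : ∀ x : ℝ, w1 φ 0 x = B ^ 2 * A * Real.exp (-φ x) := by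
    intro x
    have : ∀ s : ℝ, (w0 φ 0 (x + s)) ^ 2 * Real.exp (φ (x + s) - φ x - 0 * s)
        = (B ^ 2 * Real.exp (-φ x)) * Real.exp (-φ (x + s)) := by
      intro s
      rw [hw0 (x + s)]
      exact exp_alg (φ (x + s)) (φ x) s B
    rw [w1]
    simp_rw [this]
    rw [intervalIntegral.integral_const_mul, hintN x]
    ring
  have hM0 : M0 φ 0 = A * B := by
    rw [M0]
    simp_rw [hw0]
    rw [intervalIntegral.integral_mul_const]
  have hM1 : M1 φ 0 = B ^ 2 * A * A := by
    rw [M1]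
    simp_rw [hw1]
    rw [intervalIntegral.integral_const_mul]
  have hApos : 0 < A := by
    apply intervalIntegral.intervalIntegral_pos_of_pos
    · exact ((hφc.neg).rexp).intervalIntegrable 0 1
    · intro x; exact Real.exp_pos _
    · norm_num
  have hBpos : 0 < B := by
    apply intervalIntegral.intervalIntegral_pos_of_pos
    · exact (hφc.rexp).intervalIntegrable 0 1
    · intro x; exact Real.exp_pos _
    · norm_num
  have ha0pos : 0 < a0 := by rw [ha0]; exact mul_pos hApos hBpos
  have h1 : M0 φ 0 = a0 := by rw [hM0, ha0]
  have h2 : M1 φ 0 = a0 ^ 2 := by rw [hM1, ha0]; ring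
  refine ⟨h1, h2, ?_, ?_⟩ <;> rw [h1, h2, ha0] <;>
    field_simp <;> ring_nf
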